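/- For every nonempty composition α, the extended chromatic symmetric function of the weighted path with weights α expands into power sum symmetric functions as X_{(P_{ℓ(α)},α)} = Σ_{β ≽ α} (−1)^{ℓ(α)−ℓ(β)} p_{β̃}, the sum over all coarsenings β of α. -/

import Mathlib

open scoped BigOperators
open scoped Classical

namespace CSF

/-! ## Extended chromatic symmetric functions of multigraphs

A (multi)graph on a vertex type `V` is given by a multiset of edges `E : Multiset (Sym2 V)`
(loops and multiple edges allowed).  Colours are positive integers `ℕ+`, and the
(extended) chromatic symmetric function lives in `MvPowerSeries ℕ+ ℚ`, the power series
in the commuting variables `x_j`, `j : ℕ+`. -/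

/-- A proper colouring of the multigraph with edge multiset `E`. -/
def Proper {V C : Type*} (E : Multiset (Sym2 V)) (κ : V → C) : Prop :=
  ∀ u v : V, s(u, v) ∈ E → κ u ≠ κ v

/-- The monomial `∏_v x_{κ(v)}^{w(v)}`, recorded as its exponent vector. -/
noncomputable def mon {V : Type*} [Fintype V] (w : V → ℕ) (κ : V → ℕ+) : ℕ+ →₀ ℕ :=
  ∑ v, Finsupp.single (κ v) (w v)

/-- The extended chromatic symmetric function `X_{(G,w)}` of the weighted graph with
edge multiset `E` and vertex weights `w`: the coefficient of a monomial `m` is the number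
of proper colourings `κ` with `∏_v x_{κ(v)}^{w(v)} = x^m`. -/
noncomputable def X {V : Type*} [Fintype V] (E : Multiset (Sym2 V)) (w : V → ℕ) :
    MvPowerSeries ℕ+ ℚ :=
  fun m => (Nat.card {κ : V → ℕ+ // Proper E κ ∧ mon w κ = m} : ℚ)

/-- The chromatic polynomial `χ_G(k)`: the number of proper colourings with `k` colours. -/
noncomputable def chrom {V : Type*} [Fintype V] (E : Multiset (Sym2 V)) (k : ℕ) : ℕ :=
  Nat.card {κ : V → Fin k // Proper E κ}

/-- Edge multiset of the labelled path `P_n` on `Fin n`: edges `v_i v_{i+1}`. -/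
def pathE (n : ℕ) : Multiset (Sym2 (Fin n)) :=
  ((Finset.univ : Finset (Fin n × Fin n)).filter
    (fun p => (p.1 : ℕ) + 1 = (p.2 : ℕ))).val.map (fun p => s(p.1, p.2))

/-- Edge multiset of the labelled star `S_n` on `Fin n`: edges `v_i v_n`, `i ∈ [n-1]`. -/
def starE (n : ℕ) : Multiset (Sym2 (Fin n)) :=
  ((Finset.univ : Finset (Fin n × Fin n)).filter
    (fun p => (p.1 : ℕ) + 1 < n ∧ (p.2 : ℕ) + 1 = n)).val.map (fun p => s(p.1, p.2))

/-- Edge multiset of a disjoint union of graphs on `Fin (m i)`, `i : Fin k`. -/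
noncomputable def unionE {k : ℕ} {m : Fin k → ℕ}
    (Es : ∀ i, Multiset (Sym2 (Fin (m i)))) : Multiset (Sym2 (Σ i, Fin (m i))) :=
  ∑ i, (Es i).map (Sym2.map (fun v => ⟨i, v⟩))

/-- Extended chromatic symmetric function of a disjoint union of weighted graphs. -/
noncomputable def Xunion {k : ℕ} {m : Fin k → ℕ}
    (Es : ∀ i, Multiset (Sym2 (Fin (m i)))) (ws : ∀ i, Fin (m i) → ℕ) :
    MvPowerSeries ℕ+ ℚ :=
  X (unionE Es) (fun v => ws v.1 v.2)

/-- `X_{P_l}`: chromatic symmetric function of the disjoint union of unweighted paths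
`P_{l_1} ∪ ⋯ ∪ P_{l_k}`. -/
noncomputable def XPaths (l : List ℕ) : MvPowerSeries ℕ+ ℚ :=
  Xunion (m := fun i : Fin l.length => l.get i) (fun i => pathE (l.get i)) (fun _ _ => 1)

/-- `X_{S_l}`: chromatic symmetric function of a disjoint union of unweighted stars. -/
noncomputable def XStars (l : List ℕ) : MvPowerSeries ℕ+ ℚ :=
  Xunion (m := fun i : Fin l.length => l.get i) (fun i => starE (l.get i)) (fun _ _ => 1)

/-- `X_{(P_{ℓ(α)}, α)}`: the extended chromatic symmetric function of the path on
`ℓ(α)` vertices whose `i`-th vertex has weight `α_i`. -/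
noncomputable def Xwpath (α : List ℕ) : MvPowerSeries ℕ+ ℚ :=
  X (pathE α.length) (fun i => α.get i)

/-! ## Symmetric functions -/

/-- The power sum symmetric function `p_i = ∑_j x_j^i`. -/
noncomputable def pS (i : ℕ) : MvPowerSeries ℕ+ ℚ :=
  fun m => if ∃ j : ℕ+, m = Finsupp.single j i then 1 else 0

/-- The complete homogeneous symmetric function `h_i`. -/
noncomputable def hS (i : ℕ) : MvPowerSeries ℕ+ ℚ :=
  fun m => if (m.sum fun _ k => k) = i then 1 else 0

/-- The elementary symmetric function `e_i`. -/
noncomputable def eS (i : ℕ) : MvPowerSeries ℕ+ ℚ :=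
  fun m => if ((m.sum fun _ k => k) = i ∧ ∀ j, m j ≤ 1) then 1 else 0

/-- `p_λ = p_{λ_1} ⋯ p_{λ_k}`. -/
noncomputable def pProd (l : List ℕ) : MvPowerSeries ℕ+ ℚ := (l.map pS).prod
/-- `h_λ = h_{λ_1} ⋯ h_{λ_k}`. -/
noncomputable def hProd (l : List ℕ) : MvPowerSeries ℕ+ ℚ := (l.map hS).prod
/-- `e_λ = e_{λ_1} ⋯ e_{λ_k}`. -/
noncomputable def eProd (l : List ℕ) : MvPowerSeries ℕ+ ℚ := (l.map eS).prod

/-- The algebra `Sym` of symmetric functions, realized as the subalgebra of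
`MvPowerSeries ℕ+ ℚ` generated by the elementary symmetric functions. -/
noncomputable def SymAlg : Subalgebra ℚ (MvPowerSeries ℕ+ ℚ) :=
  Algebra.adjoin ℚ {f | ∃ i : ℕ, f = eS (i + 1)}

/-- Sort a list into weakly decreasing order (the underlying partition `α̃`). -/
def sortDesc (l : List ℕ) : List ℕ := List.insertionSort (· ≥ ·) l

/-- Partitions: weakly decreasing lists of positive integers. -/
abbrev PartL : Type := {l : List ℕ // l.Pairwise (· ≥ ·) ∧ ∀ x ∈ l, 0 < x}

/-! ## Compositions -/

/-- All coarsenings of a composition: lists obtained by summing adjacent blocks. -/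
def coarsenings : List ℕ → List (List ℕ)
  | [] => [[]]
  | a :: l =>
    (coarsenings l).map (fun β => a :: β) ++
      (coarsenings l).filterMap (fun β =>
        match β with
        | [] => none
        | b :: β' => some ((a + b) :: β'))

/-- The ribbon Schur function `r_α = ∑_{β ≽ α} (-1)^{ℓ(α) - ℓ(β)} h_{β̃}`. -/
noncomputable def ribbon (α : List ℕ) : MvPowerSeries ℕ+ ℚ :=
  ((coarsenings α).map fun β =>
    ((-1 : ℚ) ^ (α.length - β.length)) • hProd (sortDesc β)).sum

lemma sum_take_get_le (α : List ℕ) (b : Fin α.length) :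
    (α.take b).sum + α.get b ≤ α.sum := by
  have h1 : (α.take (b + 1)).sum = (α.take b).sum + α[b] := List.sum_take_succ α b b.isLt
  have h2 : (α.take (b + 1)).sum ≤ α.sum := by
    conv_rhs => rw [← List.take_append_drop (b + 1) α]
    rw [List.sum_append]
    exact Nat.le_add_right _ _
  simpa [List.get_eq_getElem, ← h1] using h2

/-- Shift a graph on `Fin m` by an offset `o` inside `Fin n`. -/
def shiftE {m n : ℕ} (o : ℕ) (h : o + m ≤ n) (E : Multiset (Sym2 (Fin m))) :
    Multiset (Sym2 (Fin n)) :=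
  E.map (Sym2.map (fun v : Fin m => (⟨o + (v : ℕ), by have := v.isLt; omega⟩ : Fin n)))

/-- The labelled graph `G_{α_1} | G_{α_2} | ⋯ | G_{α_k}` on `Fin (α₁ + ⋯ + α_k)`:
consecutive blocks of vertices carry the graphs `Gr (α_i)`. -/
noncomputable def concatE (α : List ℕ) (Gr : (k : ℕ) → Multiset (Sym2 (Fin k))) :
    Multiset (Sym2 (Fin α.sum)) :=
  ∑ b : Fin α.length,
    shiftE ((α.take b).sum) (sum_take_get_le α b) (Gr (α.get b))

/-- `set(α) = {α_1, α_1+α_2, …, α_1+⋯+α_{ℓ(α)-1}} ⊆ [n-1]`. -/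
def setC (α : List ℕ) : Finset ℕ :=
  ((List.range (α.length - 1)).map (fun j => (α.take (j + 1)).sum)).toFinset

/-- The labelled graph on `Fin n` whose edges are `v_i v_{i+1}` for `i ∈ S` (1-based). -/
def edgesFromSet (n : ℕ) (S : Finset ℕ) : Multiset (Sym2 (Fin n)) :=
  ((Finset.univ : Finset (Fin n × Fin n)).filter
    (fun p => (p.1 : ℕ) + 1 = (p.2 : ℕ) ∧ (p.2 : ℕ) ∈ S)).val.map (fun p => s(p.1, p.2))

/-- `γ = α^c`, the complement composition: the composition of `|α|` with
`set(γ) = [n-1] − set(α)`. -/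
def IsComplementOf (γ α : List ℕ) : Prop :=
  (∀ x ∈ γ, 0 < x) ∧ γ.sum = α.sum ∧ setC γ = Finset.Ioo 0 α.sum \ setC α

/-- Near concatenation `α ⊙ β` of compositions. -/
def nconcat : List ℕ → List ℕ → List ℕ
  | [], β => β
  | [a], [] => [a]
  | [a], b :: β => (a + b) :: β
  | a :: l, β => a :: nconcat l β

/-- `β^{⊙ i}`, the `i`-fold near concatenation of `β` with itself. -/
def npowOdot (β : List ℕ) : ℕ → List ℕ
  | 0 => []
  | i + 1 => nconcat (npowOdot β i) β

/-- Composition of compositions: `α ∘ β = β^{⊙α_1} · ⋯ · β^{⊙α_{ℓ(α)}}`. -/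
def compOp (α β : List ℕ) : List ℕ := (α.map (npowOdot β)).flatten

/-- The equivalence `α ∼ β`: `α` and `β` have `∘`-factorizations whose factors agree
up to reversal.  (`[1]` is a two-sided identity for `∘`, so the empty fold is harmless.) -/
def simRel (α β : List ℕ) : Prop :=
  ∃ L M : List (List ℕ),
    List.Forall₂ (fun γ δ => (γ ≠ [] ∧ ∀ x ∈ γ, 0 < x) ∧ (δ = γ ∨ δ = γ.reverse)) L M ∧
    α = L.foldr compOp [1] ∧ β = M.foldr compOp [1]

/-- A trivial factorization `α = β ∘ γ`. -/
def TrivialFac (β γ : List ℕ) : Prop :=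
  β = [1] ∨ γ = [1] ∨ (β.length = 1 ∧ γ.length = 1) ∨
    ((∀ x ∈ β, x = 1) ∧ ∀ x ∈ γ, x = 1)

/-- `L` is an irreducible factorization of `α`. -/
def IsIrreducibleFac (α : List ℕ) (L : List (List ℕ)) : Prop :=
  (∀ γ ∈ L, γ ≠ [] ∧ ∀ x ∈ γ, 0 < x) ∧
  α = L.foldr compOp [1] ∧
  (∀ i : ℕ, ∀ h : i + 1 < L.length,
    ¬ TrivialFac (L.get ⟨i, by omega⟩) (L.get ⟨i + 1, h⟩)) ∧
  (∀ γ ∈ L, ∀ δ ε : List ℕ, δ ≠ [] → (∀ x ∈ δ, 0 < x) → ε ≠ [] → (∀ x ∈ ε, 0 < x) →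
    γ = compOp δ ε → TrivialFac δ ε)

/-- All compositions of `n` (lists of positive integers with sum `n`). -/
def comps : ℕ → List (List ℕ)
  | 0 => [[]]
  | n + 1 => (List.range (n + 1)).attach.flatMap fun j =>
      (comps j.1).map (fun c => (n + 1 - j.1) :: c)
  decreasing_by exact List.mem_range.mp j.2

/-- All refinements `α ≼ λ` of a composition `λ`. -/
def refinements : List ℕ → List (List ℕ)
  | [] => [[]]
  | a :: l => (comps a).flatMap fun c => (refinements l).map (fun r => c ++ r)

/-- All compositions `α ⊆ λ`: `ℓ(α) = ℓ(λ)` and `1 ≤ α_i ≤ λ_i`. -/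
def boundedLists : List ℕ → List (List ℕ)
  | [] => [[]]
  | a :: l => (List.range a).flatMap fun j => (boundedLists l).map (fun r => (j + 1) :: r)

/-! ## Expansions of weighted graphs -/

/-- Given a decomposition `L` of `β` witnessing `β ≼ α`, vertex `a` of `H` is in the block
`R(v_v)` (0-based `v`) when `a` lies among the consecutively labelled vertices of block `v`. -/
def inBlock (L : List (List ℕ)) (v a : ℕ) : Prop :=
  ((L.take v).map List.length).sum ≤ a ∧ a < ((L.take (v + 1)).map List.length).sum

/-- The relation `a R b`: `a` and `b` lie in a common block `R(v)`. -/
def Rrel (L : List (List ℕ)) (a b : ℕ) : Prop :=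
  ∃ v : ℕ, inBlock L v a ∧ inBlock L v b

/-! ## The lattice of contractions and its Möbius function -/

/-- The restriction of the graph `E` to `B` is connected. -/
def ConnOn {V : Type*} (E : Multiset (Sym2 V)) (B : Set V) : Prop :=
  ∀ a ∈ B, ∀ b ∈ B, Relation.ReflTransGen (fun x y => x ∈ B ∧ y ∈ B ∧ s(x, y) ∈ E) a b

/-- A connected set partition of the graph `E` (as a setoid on the vertices). -/
def ConnPart {V : Type*} (E : Multiset (Sym2 V)) (σ : Setoid V) : Prop :=
  ∀ v : V, ConnOn E {u | σ.r u v}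

/-- The lattice of contractions `L_G`: connected set partitions ordered by refinement. -/
def LContr {V : Type*} (E : Multiset (Sym2 V)) : Type _ := {σ : Setoid V // ConnPart E σ}

noncomputable instance setoidFintype {V : Type*} [Fintype V] : Fintype (Setoid V) :=
  Fintype.ofInjective (fun s : Setoid V => s.r)
    (fun s t h => by cases s; cases t; simp only at h; subst h; rfl)

noncomputable instance {V : Type*} [Fintype V] (E : Multiset (Sym2 V)) : Fintype (LContr E) :=
  letI := Classical.decPred (ConnPart E)
  Subtype.fintype _

instance {V : Type*} (E : Multiset (Sym2 V)) : PartialOrder (LContr E) :=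
  Subtype.partialOrder _

noncomputable instance {V : Type*} [Fintype V] (E : Multiset (Sym2 V)) :
    LocallyFiniteOrder (LContr E) :=
  letI := Classical.decRel (α := LContr E) (· < ·)
  letI := Classical.decRel (α := LContr E) (· ≤ ·)
  Fintype.toLocallyFiniteOrder

/-- The Möbius function of the lattice of contractions. -/
noncomputable def mobLC {V : Type*} [Fintype V] (E : Multiset (Sym2 V))
    (x y : LContr E) : ℚ :=
  letI := Classical.decEq (LContr E)
  IncidenceAlgebra.mu ℚ x y

/-- `p_{type(π,w)}`: the product over the blocks of `π` of `p_{(total weight of block)}`. -/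
noncomputable def ptype {V : Type*} [Fintype V] (σ : Setoid V) (w : V → ℕ) :
    MvPowerSeries ℕ+ ℚ :=
  letI := Classical.decEq (Quotient σ)
  letI := @Quotient.fintype V _ σ (Classical.decRel _)
  ∏ c : Quotient σ, pS (∑ v : V, if Quotient.mk σ v = c then w v else 0)

/-- `0̂`, the minimal element of the lattice of contractions: each vertex is its own block. -/
def botLC {V : Type*} (E : Multiset (Sym2 V)) : LContr E :=
  ⟨⊥, by
    intro v a ha b hb
    have ha' : a = v := ha
    have hb' : b = v := hb
    subst ha'; subst hb'; exact Relation.ReflTransGen.refl⟩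

/-! ## Composition of a composition with a weighted graph -/

section comp
variable {V : Type*} [Fintype V]

/-- The gluing relation: for `i ∈ S` (1-based), identify the vertex `z` of copy `i`
with the vertex `a` of copy `i + 1` (0-based copies `i - 1` and `i`). -/
def glueRel (a z : V) (n : ℕ) (S : Finset ℕ) : (Fin n × V) → (Fin n × V) → Prop :=
  fun x y => ∃ i ∈ S, ∃ (h1 : i - 1 < n) (h2 : i < n),
    x = (⟨i - 1, h1⟩, z) ∧ y = (⟨i, h2⟩, a)

def glueSetoid (a z : V) (n : ℕ) (S : Finset ℕ) : Setoid (Fin n × V) :=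
  Relation.EqvGen.setoid (glueRel a z n S)

/-- Vertices of the graph obtained from `n` copies of a graph on `V` by contracting the
connecting edges `z_i a_{i+1}`, `i ∈ S`. -/
def compV (a z : V) (n : ℕ) (S : Finset ℕ) : Type _ := Quotient (glueSetoid a z n S)

noncomputable instance (a z : V) (n : ℕ) (S : Finset ℕ) : Fintype (compV a z n S) :=
  @Quotient.fintype _ _ (glueSetoid a z n S) (Classical.decRel _)

/-- Edges: all edges of the `n` copies of `E`, together with the connecting edges
`z_i a_{i+1}` for `i ∈ [n-1] − S` (the ones not contracted). -/
noncomputable def compE (E : Multiset (Sym2 V)) (a z : V) (n : ℕ) (S : Finset ℕ) :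
    Multiset (Sym2 (compV a z n S)) :=
  (∑ i : Fin n, E.map (Sym2.map fun v =>
      (Quotient.mk (glueSetoid a z n S) (i, v) : compV a z n S)))
  + ((Finset.Ioo 0 n \ S).attach.val.map fun i =>
      s((Quotient.mk (glueSetoid a z n S)
          (⟨i.1 - 1, by
            have := i.2; simp only [Finset.mem_sdiff, Finset.mem_Ioo] at this; omega⟩, z) :
            compV a z n S),
        (Quotient.mk (glueSetoid a z n S)
          (⟨i.1, by
            have := i.2; simp only [Finset.mem_sdiff, Finset.mem_Ioo] at this; omega⟩, a) :
            compV a z n S)))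

/-- Weights: a contracted vertex receives the sum of the weights of its constituents. -/
noncomputable def compW (w : V → ℕ) (a z : V) (n : ℕ) (S : Finset ℕ) :
    compV a z n S → ℕ :=
  fun c => ∑ x : Fin n × V,
    if (Quotient.mk (glueSetoid a z n S) x : compV a z n S) = c then w x.2 else 0

/-- `X_{α ∘ (G,w)}`: take `|α|` copies of `(G,w)`, join successive copies by edges
`z_i a_{i+1}`, and contract exactly the connecting edges with `i ∈ set(α^c)`. -/
noncomputable def Xcomp (E : Multiset (Sym2 V)) (w : V → ℕ) (a z : V) (α : List ℕ) :
    MvPowerSeries ℕ+ ℚ :=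
  X (compE E a z α.sum (Finset.Ioo 0 α.sum \ setC α))
    (compW w a z α.sum (Finset.Ioo 0 α.sum \ setC α))

end comp

/-! The two sides of the theorem satisfy the same recursion
`F(a :: b :: l) = p_a F(b :: l) - F((a + b) :: l)` with `F [] = 1`. For the extended chromatic
symmetric function this is deletion–contraction of the first edge: deleting it makes the
first vertex isolated, contributing the factor `p_a`, and the colourings that fail to be
proper once the edge is restored are exactly those of the path with the first two vertices
merged. For the signed sum over coarsenings, a coarsening of `a :: b :: l` either keeps `a`
as its own part or merges it into the next part. -/

section Coarsenings

noncomputable def coarseningSum (α : List ℕ) : MvPowerSeries ℕ+ ℚ :=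
  ((coarsenings α).map fun β => ((-1 : ℚ) ^ (α.length - β.length)) • pProd β).sum

lemma pProd_sortDesc (l : List ℕ) : pProd (sortDesc l) = pProd l :=
  ((List.perm_insertionSort _ l).map pS).prod_eq

lemma length_le_of_mem_coarsenings {α β : List ℕ} (hβ : β ∈ coarsenings α) :
    β.length ≤ α.length := by
  induction α generalizing β with
  | nil => simp_all [coarsenings]
  | cons a l ih =>
    simp only [coarsenings, List.mem_append, List.mem_map, List.mem_filterMap] at hβ
    rcases hβ with ⟨γ, hγ, rfl⟩ | ⟨_ | ⟨b, γ⟩, hγ, hm⟩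
    · simpa using ih hγ
    · cases hm
    · cases hm
      simpa using (ih hγ).trans (Nat.le_succ _)

lemma coarsenings_cons_cons (a b : ℕ) (l : List ℕ) :
    coarsenings (a :: b :: l) =
      (coarsenings (b :: l)).map (a :: ·) ++ coarsenings ((a + b) :: l) := by
  rw [coarsenings]
  congr 1
  rw [coarsenings, coarsenings, List.filterMap_append, List.filterMap_map,
    List.filterMap_filterMap]
  congr 1
  · rw [← List.filterMap_eq_map]
    rfl
  · congr 1
    funext γ
    rcases γ with _ | ⟨c, γ⟩ <;> simp [add_assoc]

lemma coarseningSum_nil : coarseningSum [] = 1 := by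
  simp [coarseningSum, coarsenings, pProd]

lemma coarseningSum_singleton (a : ℕ) : coarseningSum [a] = pS a := by
  simp [coarseningSum, coarsenings, pProd]

lemma coarseningSum_cons_cons (a b : ℕ) (l : List ℕ) :
    coarseningSum (a :: b :: l) =
      pS a * coarseningSum (b :: l) - coarseningSum ((a + b) :: l) := by
  have keep : (((coarsenings (b :: l)).map (a :: ·)).map fun β =>
      ((-1 : ℚ) ^ ((a :: b :: l).length - β.length)) • pProd β).sum =
      pS a * coarseningSum (b :: l) := by
    rw [List.map_map, coarseningSum, ← List.sum_map_mul_left]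
    congr 1
    refine List.map_congr_left fun β _ => ?_
    simp [pProd]
  have merge : ((coarsenings ((a + b) :: l)).map fun β =>
      ((-1 : ℚ) ^ ((a :: b :: l).length - β.length)) • pProd β).sum =
      (-1 : ℚ) • coarseningSum ((a + b) :: l) := by
    rw [coarseningSum, List.smul_sum, List.map_map]
    congr 1
    refine List.map_congr_left fun β hβ => ?_
    have hlen := length_le_of_mem_coarsenings hβ
    simp only [List.length_cons] at hlen ⊢
    rw [Function.comp_apply, smul_smul, ← pow_succ', Nat.sub_add_comm hlen]
  rw [coarseningSum, coarsenings_cons_cons, List.map_append, List.sum_append, keep, merge,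
    neg_one_smul, sub_eq_add_neg]

end Coarsenings

section PathColorings

lemma forall_mem_add_cons_pos {a b : ℕ} {l : List ℕ} (h : ∀ x ∈ a :: b :: l, 0 < x) :
    ∀ x ∈ (a + b) :: l, 0 < x := by
  simp only [List.mem_cons, forall_eq_or_imp] at h ⊢
  exact ⟨by omega, h.2.2⟩

lemma proper_pathE_iff {C : Type*} {k : ℕ} (κ : Fin k → C) :
    Proper (pathE k) κ ↔ ∀ i j : Fin k, (i : ℕ) + 1 = j → κ i ≠ κ j := by
  simp only [Proper, pathE, Multiset.mem_map, Finset.mem_val, Finset.mem_filter,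
    Finset.mem_univ, true_and, Prod.exists]
  constructor
  · exact fun h i j hij => h i j ⟨i, j, hij, rfl⟩
  · rintro h u v ⟨i, j, hij, huv⟩
    rcases Sym2.eq_iff.1 huv with ⟨rfl, rfl⟩ | ⟨rfl, rfl⟩
    exacts [h i j hij, (h i j hij).symm]

lemma proper_pathE_of_le_one {C : Type*} {k : ℕ} (hk : k ≤ 1) (κ : Fin k → C) :
    Proper (pathE k) κ :=
  (proper_pathE_iff κ).2 fun i j hij => absurd hij (by have := j.isLt; omega)

lemma proper_pathE_succ_succ_iff {C : Type*} {k : ℕ} (κ : Fin (k + 2) → C) :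
    Proper (pathE (k + 2)) κ ↔ κ 0 ≠ κ 1 ∧ Proper (pathE (k + 1)) (Fin.tail κ) := by
  simp only [proper_pathE_iff]
  constructor
  · exact fun h => ⟨h 0 1 rfl, fun i j hij => h i.succ j.succ (by simp [hij])⟩
  · rintro ⟨h01, h⟩ i j hij
    cases i using Fin.cases with
    | zero =>
      obtain rfl : j = 1 := Fin.ext (by rw [Fin.val_one, ← hij, Fin.val_zero])
      exact h01
    | succ i =>
      cases j using Fin.cases with
      | zero => simp at hij
      | succ j => exact h i j (by simpa using hij)

lemma le_mon_apply {V : Type*} [Fintype V] (w : V → ℕ) (κ : V → ℕ+) (v : V) :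
    w v ≤ mon w κ (κ v) := by
  have : Finsupp.single (κ v) (w v) ≤ mon w κ :=
    Finset.single_le_sum (f := fun u => Finsupp.single (κ u) (w u))
      (fun _ _ => zero_le) (Finset.mem_univ v)
  simpa using Finsupp.single_le_iff.1 this

lemma finite_mon_eq {V : Type*} [Fintype V] {w : V → ℕ} (hw : ∀ v, 0 < w v)
    (m : ℕ+ →₀ ℕ) : {κ : V → ℕ+ | mon w κ = m}.Finite := by
  refine (Set.Finite.pi fun _ => m.support.finite_toSet).subset fun κ hκ v _ => ?_
  have := le_mon_apply w κ v
  rw [show mon w κ = m from hκ] at this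
  exact Finsupp.mem_support_iff.2 (by have := hw v; omega)

lemma mon_cons (a : ℕ) (β : List ℕ) (κ : Fin (a :: β).length → ℕ+) :
    mon (fun i => (a :: β).get i) κ =
      Finsupp.single (κ 0) a + mon (fun i => β.get i) (Fin.tail κ) :=
  Fin.sum_univ_succ _

lemma mon_cons_cons_of_eq (a b : ℕ) (l : List ℕ) (κ : Fin (a :: b :: l).length → ℕ+)
    (h : κ 0 = κ 1) :
    mon (fun i => (a :: b :: l).get i) κ =
      mon (fun i => ((a + b) :: l).get i) (Fin.tail κ) := by
  rw [mon_cons, mon_cons, mon_cons, Finsupp.single_add, add_assoc, h]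
  rfl

lemma pS_mul_apply {a : ℕ} (ha : 0 < a) (f : MvPowerSeries ℕ+ ℚ) (m : ℕ+ →₀ ℕ) :
    (pS a * f) m = ∑ j ∈ m.support.filter (a ≤ m ·), f (m - Finsupp.single j a) := by
  rw [show (pS a * f) m = ∑ p ∈ Finset.HasAntidiagonal.antidiagonal m, pS a p.1 * f p.2 from
    MvPowerSeries.coeff_mul m _ _]
  symm
  refine Finset.sum_of_injOn (fun j => (Finsupp.single j a, m - Finsupp.single j a))
    (fun j _ j' _ h => Finsupp.single_left_injective ha.ne' (congrArg Prod.fst h))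
    (fun j hj => Finset.HasAntidiagonal.mem_antidiagonal.2
      (add_tsub_cancel_of_le (Finsupp.single_le_iff.2 (Finset.mem_filter.1 hj).2)))
    ?_ (fun j _ => by simp only [pS]; rw [if_pos ⟨j, rfl⟩, one_mul])
  rintro ⟨p, q⟩ hpq hne
  rw [Finset.HasAntidiagonal.mem_antidiagonal] at hpq
  simp only [pS]
  split_ifs with hp
  · obtain ⟨j, rfl⟩ := hp
    refine absurd ⟨j, ?_, ?_⟩ hne
    · have : a ≤ m j := by simp [← hpq]
      exact Finset.mem_filter.2 ⟨Finsupp.mem_support_iff.2 (by omega), this⟩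
    · simp [← hpq]
  · exact zero_mul _

abbrev PathColoring (α : List ℕ) (m : ℕ+ →₀ ℕ) : Type :=
  {κ : Fin α.length → ℕ+ // Proper (pathE α.length) κ ∧ mon (fun i => α.get i) κ = m}

/-- Proper colourings of the weighted path `a :: β` with its first edge deleted. -/
abbrev HeadFreeColoring (a : ℕ) (β : List ℕ) (m : ℕ+ →₀ ℕ) : Type :=
  {κ : Fin (a :: β).length → ℕ+ //
    Proper (pathE β.length) (Fin.tail κ) ∧ mon (fun i => (a :: β).get i) κ = m}

lemma Xwpath_apply (α : List ℕ) (m : ℕ+ →₀ ℕ) :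
    Xwpath α m = Nat.card (PathColoring α m) :=
  rfl

lemma finite_pathColoring {α : List ℕ} (hα : ∀ x ∈ α, 0 < x) (m : ℕ+ →₀ ℕ) :
    Finite (PathColoring α m) :=
  ((finite_mon_eq (fun i => hα _ (List.get_mem α i)) m).subset fun _ hκ => hκ.2).to_subtype

def sigmaEquivHeadFreeColoring {a : ℕ} (ha : 0 < a) (β : List ℕ) (m : ℕ+ →₀ ℕ) :
    (Σ j : m.support.filter (a ≤ m ·), PathColoring β (m - Finsupp.single (j : ℕ+) a)) ≃
      HeadFreeColoring a β m where
  toFun x := ⟨Fin.cons x.1 x.2.1, x.2.2.1, by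
    rw [mon_cons, Fin.tail_cons, x.2.2.2]
    exact add_tsub_cancel_of_le (Finsupp.single_le_iff.2 (Finset.mem_filter.1 x.1.2).2)⟩
  invFun κ :=
    have hsplit := (mon_cons a β κ.1).symm.trans κ.2.2
    have hle : a ≤ m (κ.1 0) := by simp [← hsplit]
    ⟨⟨κ.1 0, Finset.mem_filter.2 ⟨Finsupp.mem_support_iff.2 (by omega), hle⟩⟩,
      Fin.tail κ.1, κ.2.1, eq_tsub_of_add_eq ((add_comm _ _).trans hsplit)⟩
  left_inv _ := rfl
  right_inv κ := Subtype.ext (Fin.cons_self_tail κ.1)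

lemma pS_mul_Xwpath_apply {a : ℕ} (ha : 0 < a) {β : List ℕ} (hβ : ∀ x ∈ β, 0 < x)
    (m : ℕ+ →₀ ℕ) : (pS a * Xwpath β) m = Nat.card (HeadFreeColoring a β m) := by
  have := finite_pathColoring hβ
  rw [pS_mul_apply ha, ← Nat.card_congr (sigmaEquivHeadFreeColoring ha β m), Nat.card_sigma,
    Nat.cast_sum, ← Finset.sum_coe_sort]
  rfl

/-- Deletion–contraction of the first edge. -/
def headFreeColoringEquiv (a b : ℕ) (l : List ℕ) (m : ℕ+ →₀ ℕ) :
    HeadFreeColoring a (b :: l) m ≃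
      PathColoring (a :: b :: l) m ⊕ PathColoring ((a + b) :: l) m :=
  (Equiv.sumCompl fun κ : HeadFreeColoring a (b :: l) m => κ.1 0 = κ.1 1).symm.trans <|
    (Equiv.sumComm _ _).trans <| Equiv.sumCongr
      { toFun κ := ⟨κ.1.1, (proper_pathE_succ_succ_iff _).2 ⟨κ.2, κ.1.2.1⟩, κ.1.2.2⟩
        invFun κ := ⟨⟨κ.1, ((proper_pathE_succ_succ_iff _).1 κ.2.1).2, κ.2.2⟩,
          ((proper_pathE_succ_succ_iff _).1 κ.2.1).1⟩
        left_inv _ := rfl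
        right_inv _ := rfl }
      { toFun κ := ⟨Fin.tail κ.1.1, κ.1.2.1,
          (mon_cons_cons_of_eq a b l _ κ.2).symm.trans κ.1.2.2⟩
        invFun κ := ⟨⟨Fin.cons (κ.1 0) κ.1, κ.2.1,
          (mon_cons_cons_of_eq a b l _ rfl).trans κ.2.2⟩, rfl⟩
        left_inv κ := Subtype.ext <| Subtype.ext <| by
          conv_rhs => rw [← Fin.cons_self_tail κ.1.1, κ.2]
          rfl
        right_inv _ := rfl }

lemma Xwpath_nil : Xwpath [] = 1 := by
  funext m
  rw [Xwpath_apply, show (1 : MvPowerSeries ℕ+ ℚ) m = _ from MvPowerSeries.coeff_one m]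
  have hmon (κ : Fin 0 → ℕ+) : mon (fun i => ([] : List ℕ).get i) κ = 0 := Finset.sum_empty
  split_ifs with hm
  · have : Unique (PathColoring [] m) :=
      { default := ⟨finZeroElim, proper_pathE_of_le_one (by simp) _, (hmon _).trans hm.symm⟩
        uniq _ := Subtype.ext (funext finZeroElim) }
    simp
  · have : IsEmpty (PathColoring [] m) := ⟨fun κ => hm ((hmon _).symm.trans κ.2.2).symm⟩
    simp

lemma Xwpath_singleton {a : ℕ} (ha : 0 < a) : Xwpath [a] = pS a := by
  rw [← mul_one (pS a), ← Xwpath_nil]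
  funext m
  rw [pS_mul_Xwpath_apply ha (by simp), Xwpath_apply]
  exact Nat.cast_inj.2 (Nat.card_congr (Equiv.subtypeEquivRight fun κ =>
    and_congr_left fun _ => iff_of_true (proper_pathE_of_le_one (by simp) _)
      (proper_pathE_of_le_one (by simp) _)))

lemma Xwpath_cons_cons {a b : ℕ} {l : List ℕ} (h : ∀ x ∈ a :: b :: l, 0 < x) :
    Xwpath (a :: b :: l) = pS a * Xwpath (b :: l) - Xwpath ((a + b) :: l) := by
  have := finite_pathColoring h
  have := finite_pathColoring (forall_mem_add_cons_pos h)
  rw [eq_sub_iff_add_eq]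
  funext m
  rw [pS_mul_Xwpath_apply (h a (by simp)) (List.forall_mem_cons.1 h).2,
    Nat.card_congr (headFreeColoringEquiv a b l m), Nat.card_sum, Nat.cast_add]
  rfl

end PathColorings

theorem Xwpath_eq_coarseningSum :
    ∀ α : List ℕ, (∀ x ∈ α, 0 < x) → Xwpath α = coarseningSum α
  | [], _ => by rw [Xwpath_nil, coarseningSum_nil]
  | [a], h => by rw [Xwpath_singleton (h a (by simp)), coarseningSum_singleton]
  | a :: b :: l, h => by
    rw [Xwpath_cons_cons h, coarseningSum_cons_cons,
      Xwpath_eq_coarseningSum (b :: l) (List.forall_mem_cons.1 h).2,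
      Xwpath_eq_coarseningSum ((a + b) :: l) (forall_mem_add_cons_pos h)]
termination_by α => α.length

theorem weighted_path_power_sum_expansion_general
    (α : List ℕ) (hαpos : ∀ x ∈ α, 0 < x) :
    Xwpath α =
      ((coarsenings α).map fun β =>
        ((-1 : ℚ) ^ (α.length - β.length)) • pProd (sortDesc β)).sum := by
  simp only [Xwpath_eq_coarseningSum α hαpos, coarseningSum, pProd_sortDesc]

/-- **Power sum expansion of weighted paths.** For every nonempty composition `α`:
`X_{(P_{ℓ(α)},α)} = ∑_{β ≽ α} (-1)^{ℓ(α) - ℓ(β)} p_{β̃}`. -/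
theorem weighted_path_power_sum_expansion
    (α : List ℕ) (hα : α ≠ []) (hαpos : ∀ x ∈ α, 0 < x) :
    Xwpath α =
      ((coarsenings α).map fun β =>
        ((-1 : ℚ) ^ (α.length - β.length)) • pProd (sortDesc β)).sum :=
  weighted_path_power_sum_expansion_general α hαpos

end CSF
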